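/- arXiv:0903.1904 — 6 statements merged into one kernel-verified Lean document; each statement's English description precedes it below -/
import Mathlib

section
/- Let u⁰, d⁰ ∈ ℂ² be linearly independent, let φ ∈ ℂ⁴ define a projector on qubits 0 and 1 with invertible transfer matrix T_φ, and set u¹ = T_φ u⁰, d¹ = T_φ d⁰. Then the vector u⁰ ⊗ d¹ + d⁰ ⊗ u¹ ∈ ℂ² ⊗ ℂ² is orthogonal to φ. -/
open Matrix

/-- The Bravyi transfer matrix `T_φ = ε φ†` of a two-qubit state `φ`. -/
noncomputable def transferMatrix (φ : Fin 2 → Fin 2 → ℂ) : Matrix (Fin 2) (Fin 2) ℂ :=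
  !![starRingEnd ℂ (φ 0 1), starRingEnd ℂ (φ 1 1);
     -(starRingEnd ℂ (φ 0 0)), -(starRingEnd ℂ (φ 1 0))]

/-- If `u⁰, d⁰` are linearly independent, `T_φ` is invertible, and `u¹ = T_φ u⁰`,
`d¹ = T_φ d⁰`, then the symmetric combination `u⁰ ⊗ d¹ + d⁰ ⊗ u¹` is orthogonal to `φ`. -/
theorem stmt2 (φ : Fin 2 → Fin 2 → ℂ) (u0 d0 : Fin 2 → ℂ)
    (hli : LinearIndependent ℂ ![u0, d0])
    (hT : IsUnit (transferMatrix φ))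
    (u1 d1 : Fin 2 → ℂ)
    (hu1 : u1 = (transferMatrix φ).mulVec u0)
    (hd1 : d1 = (transferMatrix φ).mulVec d0) :
    ∑ i : Fin 2, ∑ j : Fin 2,
      starRingEnd ℂ (φ i j) * (u0 i * d1 j + d0 i * u1 j) = 0 := by
  subst hu1 hd1
  simp [Fin.sum_univ_two, transferMatrix, mulVec, dotProduct]
  ring
end

section
/- Let u, d ∈ ℂ² be linearly independent eigenvectors of an invertible 2×2 complex matrix L with distinct eigenvalues λ_u ≠ λ_d, and let φ ∈ ℂ⁴ be such that its transfer matrix satisfies T_φ = L (in the sense that the loop transfer matrix is L). Then ⟨φ, u ⊗ d + d ⊗ u⟩ = (λ_u − λ_d)(uᵀ ε d) up to the identification, and in particular since λ_u ≠ λ_d and uᵀ ε d ≠ 0, the symmetric combination u ⊗ d + d ⊗ u is NOT orthogonal to φ. -/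
open Matrix

lemma det_ne_of_li (u d : Fin 2 → ℂ) (hli : LinearIndependent ℂ ![u, d]) :
    u 0 * d 1 - u 1 * d 0 ≠ 0 := by
  rw [LinearIndependent.pair_iff] at hli
  intro h
  have h1 := hli (d 1) (-(u 1)) (by
    funext i
    fin_cases i <;> simp <;> ring_nf
    · linear_combination h)
  have hd1 : d 1 = 0 := h1.1
  have hu1 : u 1 = 0 := by have := h1.2; simpa using this
  have h2 := hli (d 0) (-(u 0)) (by
    funext i
    fin_cases i <;> simp [hd1, hu1] <;> ring)
  have hd0 : d 0 = 0 := h2.1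
  have hu0 : u 0 = 0 := by have := h2.2; simpa using this
  have := hli 1 0 (by
    funext i
    fin_cases i <;> simp [hd1, hu1, hd0, hu0])
  simpa using this.1

/-- If `u, d` are linearly independent eigenvectors of the invertible loop transfer matrix
`L = T_φ` with distinct eigenvalues `λu ≠ λd`, then
`⟨φ, u ⊗ d + d ⊗ u⟩ = (λu − λd)(uᵀ ε d)`, and in particular the symmetric combination
`u ⊗ d + d ⊗ u` is not orthogonal to `φ`. -/
theorem stmt3 (L : Matrix (Fin 2) (Fin 2) ℂ) (hL : IsUnit L)
    (u d : Fin 2 → ℂ) (lu ld : ℂ)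
    (hu : L.mulVec u = lu • u) (hd : L.mulVec d = ld • d)
    (hne : lu ≠ ld) (hli : LinearIndependent ℂ ![u, d])
    (φ : Fin 2 → Fin 2 → ℂ) (hφ : transferMatrix φ = L) :
    (∑ i : Fin 2, ∑ j : Fin 2,
        starRingEnd ℂ (φ i j) * (u i * d j + d i * u j) =
      (lu - ld) * (u 0 * d 1 - u 1 * d 0)) ∧
    ∑ i : Fin 2, ∑ j : Fin 2,
        starRingEnd ℂ (φ i j) * (u i * d j + d i * u j) ≠ 0 := by
  have hu0 := congrFun hu 0
  have hu1 := congrFun hu 1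
  have hd0 := congrFun hd 0
  have hd1 := congrFun hd 1
  simp [Matrix.mulVec, dotProduct, Fin.sum_univ_two] at hu0 hu1 hd0 hd1
  have e00 := congrFun (congrFun hφ 0) 0
  have e01 := congrFun (congrFun hφ 0) 1
  have e10 := congrFun (congrFun hφ 1) 0
  have e11 := congrFun (congrFun hφ 1) 1
  simp [transferMatrix] at e00 e01 e10 e11
  have key : ∑ i : Fin 2, ∑ j : Fin 2,
        starRingEnd ℂ (φ i j) * (u i * d j + d i * u j) =
      (lu - ld) * (u 0 * d 1 - u 1 * d 0) := by
    simp only [Fin.sum_univ_two]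
    linear_combination (-(u 0 * d 0 + d 0 * u 0)) * e10 + (u 0 * d 1 + d 0 * u 1) * e00 +
      (-(u 1 * d 0 + d 1 * u 0)) * e11 + (u 1 * d 1 + d 1 * u 1) * e01 +
      d 1 * hu0 - d 0 * hu1 - u 0 * hd1 + u 1 * hd0
  refine ⟨key, ?_⟩
  rw [key]
  exact mul_ne_zero (sub_ne_zero.mpr hne) (det_ne_of_li u d hli)
end

section
/- Suppose an instance H of k-QSAT on N qubits (a sum of rank-1 projectors |φ_m⟩⟨φ_m| on k-subsets of qubits) admits a satisfying product state ψ₁ ⊗ ... ⊗ ψ_N. If Π = |φ⟩⟨φ| is an additional rank-1 projector acting on k qubits at least one of which is a new qubit N+1 not acted on by H, then H' = H ⊗ I + Π (suitably extended to N+1 qubits) admits a satisfying product state on N+1 qubits. -/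
/-- The product state `ψ₁ ⊗ ... ⊗ ψ_N` is annihilated by the rank-1 projector `|φ⟩⟨φ|`
acting on the qubits `S 0, ..., S (k-1)`: this holds iff the product state is orthogonal
to `φ` on those qubits. -/
def SatisfiesClause {N k : ℕ} (S : Fin k → Fin N) (φ : (Fin k → Fin 2) → ℂ)
    (ψ : Fin N → Fin 2 → ℂ) : Prop :=
  ∑ f : Fin k → Fin 2, starRingEnd ℂ (φ f) * ∏ j : Fin k, ψ (S j) (f j) = 0

/-- If an instance of k-QSAT on `N` qubits has a satisfying product state, and a new
rank-1 projector is added which acts on a new qubit `N+1` (here `Fin.last N`), then the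
enlarged instance on `N+1` qubits has a satisfying product state extending the old one. -/
theorem stmt7 (N k M : ℕ)
    (S : Fin M → Fin k → Fin N) (hS : ∀ m, Function.Injective (S m))
    (φ : Fin M → (Fin k → Fin 2) → ℂ)
    (ψ : Fin N → Fin 2 → ℂ) (hψ : ∀ i, ψ i ≠ 0)
    (hsat : ∀ m, SatisfiesClause (S m) (φ m) ψ)
    (S' : Fin k → Fin (N + 1)) (hS' : Function.Injective S')
    (hnew : ∃ j, S' j = Fin.last N)
    (φ' : (Fin k → Fin 2) → ℂ) :
    ∃ ψ' : Fin (N + 1) → Fin 2 → ℂ,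
      (∀ i, ψ' i ≠ 0) ∧
      (∀ i : Fin N, ψ' i.castSucc = ψ i) ∧
      (∀ m, SatisfiesClause (Fin.castSucc ∘ S m) (φ m) ψ') ∧
      SatisfiesClause S' φ' ψ' := by
  obtain ⟨j₀, hj₀⟩ := hnew
  -- the fixed factors for j ≠ j₀
  set r : Fin k → Fin 2 → ℂ := fun j b =>
    if h : S' j = Fin.last N then 1 else ψ ((S' j).castPred h) b with hr
  set c : Fin 2 → ℂ := fun b =>
    ∑ f : Fin k → Fin 2,
      if f j₀ = b then starRingEnd ℂ (φ' f) * ∏ j ∈ Finset.univ.erase j₀, r j (f j) else 0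
    with hcdef
  set v : Fin 2 → ℂ := if hc0 : c = 0 then ![1, 0] else ![-(c 1), c 0] with hv
  have hvne : v ≠ 0 := by
    rw [hv]
    split
    · intro h
      have := congrFun h 0
      simp at this
    · rename_i hc0
      intro h
      apply hc0
      funext b
      have h0 := congrFun h 0
      have h1 := congrFun h 1
      simp at h0 h1
      fin_cases b <;> simp [h0, h1]
  have hvc : v 0 * c 0 + v 1 * c 1 = 0 := by
    rw [hv]
    split
    · rename_i hc0
      simp [hc0]
    · simp; ring
  set ψ' : Fin (N + 1) → Fin 2 → ℂ := Fin.snoc ψ v with hψ'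
  have hsnoc : ∀ (x : Fin (N + 1)) (h : x ≠ Fin.last N), ψ' x = ψ (x.castPred h) := by
    intro x h
    induction x using Fin.lastCases with
    | last => exact absurd rfl h
    | cast i => simp [hψ']
  refine ⟨ψ', ?_, ?_, ?_, ?_⟩
  · intro i
    induction i using Fin.lastCases with
    | last => simpa [hψ'] using hvne
    | cast i => simpa [hψ'] using hψ i
  · intro i; simp [hψ']
  · intro m
    have := hsat m
    simpa [SatisfiesClause, hψ'] using this
  · unfold SatisfiesClause
    have key : ∀ f : Fin k → Fin 2,
        starRingEnd ℂ (φ' f) * ∏ j : Fin k, ψ' (S' j) (f j)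
          = ∑ b : Fin 2, v b *
              (if f j₀ = b then starRingEnd ℂ (φ' f) * ∏ j ∈ Finset.univ.erase j₀, r j (f j) else 0) := by
      intro f
      have hprod : ∏ j : Fin k, ψ' (S' j) (f j)
          = v (f j₀) * ∏ j ∈ Finset.univ.erase j₀, r j (f j) := by
        rw [← Finset.mul_prod_erase Finset.univ _ (Finset.mem_univ j₀)]
        congr 1
        · rw [hj₀]; simp [hψ']
        · apply Finset.prod_congr rfl
          intro j hj
          have hne : S' j ≠ Fin.last N := by
            intro h
            exact (Finset.mem_erase.mp hj).1 (hS' (h.trans hj₀.symm))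
          rw [hsnoc (S' j) hne, hr]
          simp only [hne, dite_false]
      rw [hprod]
      simp only [mul_ite, mul_zero]
      rw [Finset.sum_ite_eq]
      simp
      ring
    rw [Finset.sum_congr rfl (fun f _ => key f)]
    rw [Finset.sum_comm]
    have : ∀ b : Fin 2, (∑ f : Fin k → Fin 2, v b *
        (if f j₀ = b then starRingEnd ℂ (φ' f) * ∏ j ∈ Finset.univ.erase j₀, r j (f j) else 0))
        = v b * c b := by
      intro b
      rw [← Finset.mul_sum, hcdef]
    rw [Finset.sum_congr rfl (fun b _ => this b)]
    rw [Fin.sum_univ_two]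
    exact hvc
end

section
/- Geometrization Theorem: Fix a k-uniform hypergraph G with M edges on N vertices. For φ = (φ₁,...,φ_M) ∈ ((ℂ²)^{⊗k})^M, let H_φ = Σ_m |φ_m⟩⟨φ_m| (each acting on the qubits of edge m, tensored with identity). Then there is an integer D such that dim ker(H_φ) = D for all φ outside a proper algebraic subset of (ℂ^{2^k})^M; moreover dim ker(H_φ) ≥ D for all φ, i.e. the generic kernel dimension is the minimal one. -/
/-- The matrix (in the computational basis of `(ℂ²)^{⊗N}`) of the rank-1 projector
`|φ⟩⟨φ|` on the qubits `S 0, ..., S (k-1)`, tensored with the identity elsewhere. -/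
noncomputable def clauseMatrix (N k : ℕ) (S : Fin k → Fin N) (φ : (Fin k → Fin 2) → ℂ) :
    Matrix (Fin N → Fin 2) (Fin N → Fin 2) ℂ := fun g g' =>
  if ∀ i : Fin N, (∀ j : Fin k, S j ≠ i) → g i = g' i
    then φ (g ∘ S) * starRingEnd ℂ (φ (g' ∘ S)) else 0

/-- The k-QSAT Hamiltonian `H_φ = Σ_m |φ_m⟩⟨φ_m|` on the hypergraph with edges `E`. -/
noncomputable def qsatHamiltonian (N k M : ℕ) (E : Fin M → Fin k → Fin N)
    (φ : Fin M → (Fin k → Fin 2) → ℂ) :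
    Matrix (Fin N → Fin 2) (Fin N → Fin 2) ℂ :=
  ∑ m, clauseMatrix N k (E m) (φ m)

/-- Real coordinates (real and imaginary parts) of the clause vectors `φ`. -/
noncomputable def realCoords (k M : ℕ) (φ : Fin M → (Fin k → Fin 2) → ℂ) :
    Fin M × (Fin k → Fin 2) × Bool → ℝ := fun x =>
  if x.2.2 then (φ x.1 x.2.1).re else (φ x.1 x.2.1).im

open Matrix Module MvPolynomial

section Aux
variable {K : Type*} [Field K]

lemma exists_linIndep_comp {V ι : Type*} [AddCommGroup V] [Module K V] [Fintype ι]
    (v : ι → V) (r : ℕ) (h : finrank K (Submodule.span K (Set.range v)) = r) :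
    ∃ g : Fin r → ι, LinearIndependent K (v ∘ g) := by
  classical
  obtain ⟨b, hbt, hspan, hli⟩ := exists_linearIndependent K (Set.range v)
  have hbfin : b.Finite := (Set.finite_range v).subset hbt
  haveI : Fintype b := hbfin.fintype
  have hcard : Fintype.card b = r := by
    have := finrank_span_set_eq_card hli
    rw [hspan, h] at this
    rw [this, Set.toFinset_card]
  let e : Fin r ≃ b := (Fintype.equivFinOfCardEq hcard).symm
  have hsel : ∀ i : Fin r, ∃ j : ι, v j = (e i : V) := fun i => hbt (e i).2
  choose g hg using hsel
  refine ⟨g, ?_⟩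
  have hvg : v ∘ g = (fun x : b => (x : V)) ∘ e := funext fun i => hg i
  rw [hvg]
  exact hli.comp e e.injective

lemma exists_det_ne_zero {m : Type*} [Fintype m] [DecidableEq m] (A : Matrix m m K) :
    ∃ f g : Fin A.rank → m, (A.submatrix f g).det ≠ 0 := by
  classical
  have hc : finrank K (Submodule.span K (Set.range Aᵀ)) = A.rank :=
    (rank_eq_finrank_span_cols A).symm
  obtain ⟨g, hg⟩ := exists_linIndep_comp Aᵀ A.rank hc
  set B : Matrix m (Fin A.rank) K := A.submatrix id g with hB
  have hBT : Bᵀ = Aᵀ ∘ g := by ext i j; rfl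
  have hrB : B.rank = A.rank := by
    rw [rank_eq_finrank_span_cols, show B.col = Bᵀ from rfl, hBT]
    simpa using finrank_span_eq_card hg
  have hr2 : finrank K (Submodule.span K (Set.range B)) = A.rank := by
    have h1 : Bᵀ.rank = A.rank := by rw [rank_transpose, hrB]
    calc finrank K (Submodule.span K (Set.range B))
        = finrank K (Submodule.span K (Set.range Bᵀᵀ)) := by rw [transpose_transpose]
      _ = Bᵀ.rank := (rank_eq_finrank_span_cols Bᵀ).symm
      _ = A.rank := h1
  obtain ⟨f, hf⟩ := exists_linIndep_comp B A.rank hr2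
  refine ⟨f, g, ?_⟩
  have hsub : (fun i => (A.submatrix f g) i) = B ∘ f := rfl
  have hU : IsUnit (A.submatrix f g) :=
    linearIndependent_rows_iff_isUnit.mp (by show LinearIndependent K (fun i => (A.submatrix f g) i); rw [hsub]; exact hf)
  exact ((Matrix.isUnit_iff_isUnit_det _).mp hU).ne_zero

lemma rank_submatrix_le' {l m : Type*} [Fintype l] [Fintype m] [DecidableEq m]
    (A : Matrix m m K) (f g : l → m) : (A.submatrix f g).rank ≤ A.rank := by
  classical
  have h1 : A.submatrix f g = (A.submatrix f id) * ((1 : Matrix m m K).submatrix id g) := by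
    ext i j
    simp [Matrix.mul_apply, Matrix.one_apply, mul_ite, ite_mul]
  have h2 : A.submatrix f (id : m → m) = ((1 : Matrix m m K).submatrix f id) * A := by
    ext i j
    simp [Matrix.mul_apply, Matrix.one_apply, mul_ite, ite_mul]
  calc (A.submatrix f g).rank ≤ (A.submatrix f (id : m → m)).rank :=
        h1 ▸ rank_mul_le_left _ _
    _ ≤ A.rank := h2 ▸ rank_mul_le_right _ _

lemma exists_re_im {ι : Type*} (q : MvPolynomial ι ℂ) :
    ∃ a b : MvPolynomial ι ℝ, ∀ x : ι → ℝ,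
      MvPolynomial.eval (fun i => (x i : ℂ)) q =
        (MvPolynomial.eval x a : ℝ) + (MvPolynomial.eval x b : ℝ) * Complex.I := by
  induction q using MvPolynomial.induction_on with
  | C c =>
      exact ⟨C c.re, C c.im, fun x => by
        simp only [eval_C]; exact (Complex.re_add_im c).symm⟩
  | add p q hp hq =>
      obtain ⟨a1, b1, h1⟩ := hp; obtain ⟨a2, b2, h2⟩ := hq
      refine ⟨a1 + a2, b1 + b2, fun x => ?_⟩
      simp only [map_add, h1 x, h2 x, Complex.ofReal_add]
      ring
  | mul_X p i hp =>
      obtain ⟨a, b, h⟩ := hp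
      refine ⟨a * X i, b * X i, fun x => ?_⟩
      simp only [_root_.map_mul, h x, eval_X, Complex.ofReal_mul]
      ring

end Aux

/-- Geometrization theorem: for a fixed k-uniform hypergraph `G` with `M` edges, there is
an integer `D` such that `dim ker H_φ ≥ D` for every choice of clause vectors `φ`, and
`dim ker H_φ = D` away from the zero set of a nonzero polynomial in the (real and
imaginary parts of the) components of `φ` — i.e. the generic kernel dimension is the
minimal one, attained with probability 1. -/
theorem stmt9 (N k M : ℕ) (E : Fin M → Fin k → Fin N)
    (hE : ∀ m, Function.Injective (E m)) :
    ∃ D : ℕ,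
      (∀ φ : Fin M → (Fin k → Fin 2) → ℂ,
        D ≤ Module.finrank ℂ
          (LinearMap.ker (Matrix.toLin' (qsatHamiltonian N k M E φ)))) ∧
      ∃ p : MvPolynomial (Fin M × (Fin k → Fin 2) × Bool) ℝ, p ≠ 0 ∧
        ∀ φ : Fin M → (Fin k → Fin 2) → ℂ,
          Module.finrank ℂ
            (LinearMap.ker (Matrix.toLin' (qsatHamiltonian N k M E φ))) ≠ D →
          MvPolynomial.eval (realCoords k M φ) p = 0 := by
  classical
  set n := Fintype.card (Fin N → Fin 2) with hn
  set dk : (Fin M → (Fin k → Fin 2) → ℂ) → ℕ := fun φ =>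
    Module.finrank ℂ (LinearMap.ker (Matrix.toLin' (qsatHamiltonian N k M E φ))) with hdk
  -- rank-nullity
  have hker : ∀ φ, (qsatHamiltonian N k M E φ).rank + dk φ = n := by
    intro φ
    have hTL : Matrix.toLin' (qsatHamiltonian N k M E φ)
        = (qsatHamiltonian N k M E φ).mulVecLin := by
      apply LinearMap.ext
      intro v
      rw [Matrix.toLin'_apply, Matrix.mulVecLin_apply]
    have := LinearMap.finrank_range_add_finrank_ker
      ((qsatHamiltonian N k M E φ).mulVecLin)
    rw [Module.finrank_fintype_fun_eq_card] at this
    show (qsatHamiltonian N k M E φ).rank + Module.finrank ℂ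
      (LinearMap.ker (Matrix.toLin' (qsatHamiltonian N k M E φ))) = n
    rw [hTL, Matrix.rank]
    exact this
  have hrle : ∀ φ, (qsatHamiltonian N k M E φ).rank ≤ n := fun φ =>
    le_of_add_le_left (le_of_eq (hker φ))
  -- define D as the minimal kernel dimension
  set S : Set ℕ := Set.range dk with hS
  have hSne : S.Nonempty := ⟨dk 0, ⟨0, rfl⟩⟩
  set D : ℕ := sInf S with hD
  obtain ⟨φ₀, hφ₀⟩ : ∃ φ₀, dk φ₀ = D := Nat.sInf_mem hSne
  have hDle : ∀ φ, D ≤ dk φ := fun φ => Nat.sInf_le ⟨φ, rfl⟩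
  set r : ℕ := (qsatHamiltonian N k M E φ₀).rank with hr
  have hbad : ∀ φ, dk φ ≠ D → (qsatHamiltonian N k M E φ).rank < r := by
    intro φ hne
    have h1 := hker φ
    have h2 := hker φ₀
    have h3 := hDle φ
    rw [hφ₀] at h2
    omega
  -- the polynomial matrix
  set Pm : Matrix (Fin N → Fin 2) (Fin N → Fin 2)
      (MvPolynomial (Fin M × (Fin k → Fin 2) × Bool) ℂ) := fun g g' =>
    ∑ m, if ∀ i : Fin N, (∀ j : Fin k, E m j ≠ i) → g i = g' i
      then (X (m, g ∘ E m, true) + C Complex.I * X (m, g ∘ E m, false)) *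
           (X (m, g' ∘ E m, true) - C Complex.I * X (m, g' ∘ E m, false)) else 0 with hPmdef
  have hz1 : ∀ z : ℂ, (↑z.re + Complex.I * ↑z.im) = z := fun z => by
    rw [mul_comm]; exact z.re_add_im
  have hz2 : ∀ z : ℂ, (↑z.re - Complex.I * ↑z.im) = starRingEnd ℂ z := fun z => by
    apply Complex.ext <;> simp
  have hPm : ∀ φ, Pm.map (MvPolynomial.eval (fun v => ((realCoords k M φ v : ℝ) : ℂ)))
      = qsatHamiltonian N k M E φ := by
    intro φ
    ext g g'
    rw [Matrix.map_apply, hPmdef]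
    rw [qsatHamiltonian, Matrix.sum_apply]
    rw [map_sum]
    refine Finset.sum_congr rfl fun m _ => ?_
    rw [apply_ite (MvPolynomial.eval (fun v => ((realCoords k M φ v : ℝ) : ℂ)))]
    rw [clauseMatrix]
    split_ifs with hcond
    · simp only [_root_.map_mul, map_add, map_sub, eval_X, eval_C]
      have h1 : realCoords k M φ (m, g ∘ E m, true) = (φ m (g ∘ E m)).re := rfl
      have h2 : realCoords k M φ (m, g ∘ E m, false) = (φ m (g ∘ E m)).im := rfl
      have h3 : realCoords k M φ (m, g' ∘ E m, true) = (φ m (g' ∘ E m)).re := rfl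
      have h4 : realCoords k M φ (m, g' ∘ E m, false) = (φ m (g' ∘ E m)).im := rfl
      rw [h1, h2, h3, h4, hz1, hz2]
    · exact map_zero _
  -- nonsingular minor at φ₀
  obtain ⟨f, g, hfg⟩ := exists_det_ne_zero (qsatHamiltonian N k M E φ₀)
  set q : MvPolynomial (Fin M × (Fin k → Fin 2) × Bool) ℂ := (Pm.submatrix f g).det with hq
  have hevalq : ∀ φ, MvPolynomial.eval (fun v => ((realCoords k M φ v : ℝ) : ℂ)) q
      = ((qsatHamiltonian N k M E φ).submatrix f g).det := by
    intro φ
    rw [hq, RingHom.map_det, RingHom.mapMatrix_apply, ← Matrix.submatrix_map, hPm]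
  obtain ⟨a, b, hab⟩ := exists_re_im q
  refine ⟨D, fun φ => hDle φ, a ^ 2 + b ^ 2, ?_, ?_⟩
  · -- p ≠ 0 since it is nonzero at realCoords φ₀
    intro hp0
    have h0 := hab (realCoords k M φ₀)
    rw [hevalq φ₀] at h0
    have hz : MvPolynomial.eval (realCoords k M φ₀) (a ^ 2 + b ^ 2) = 0 := by
      rw [hp0]; exact map_zero _
    rw [map_add, map_pow, map_pow] at hz
    have ha0 : MvPolynomial.eval (realCoords k M φ₀) a = 0 := by nlinarith [sq_nonneg (MvPolynomial.eval (realCoords k M φ₀) a), sq_nonneg (MvPolynomial.eval (realCoords k M φ₀) b)]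
    have hb0 : MvPolynomial.eval (realCoords k M φ₀) b = 0 := by nlinarith [sq_nonneg (MvPolynomial.eval (realCoords k M φ₀) a), sq_nonneg (MvPolynomial.eval (realCoords k M φ₀) b)]
    rw [ha0, hb0] at h0
    simp at h0
    exact hfg h0
  · intro φ hne
    have hrlt : (qsatHamiltonian N k M E φ).rank < r := hbad φ hne
    -- the minor vanishes at φ
    have hdet0 : ((qsatHamiltonian N k M E φ).submatrix f g).det = 0 := by
      by_contra hd
      have hU : IsUnit ((qsatHamiltonian N k M E φ).submatrix f g) :=
        (Matrix.isUnit_iff_isUnit_det _).mpr (isUnit_iff_ne_zero.mpr hd)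
      have h1 : ((qsatHamiltonian N k M E φ).submatrix f g).rank = r := by
        rw [Matrix.rank_of_isUnit _ hU, Fintype.card_fin]
      have h2 := rank_submatrix_le' (qsatHamiltonian N k M E φ) f g
      omega
    have h0 := hab (realCoords k M φ)
    rw [hevalq φ, hdet0] at h0
    have ha0 : MvPolynomial.eval (realCoords k M φ) a = 0 ∧
        MvPolynomial.eval (realCoords k M φ) b = 0 := by
      have := h0.symm
      rw [Complex.ext_iff] at this
      simpa using this
    rw [map_add, map_pow, map_pow, ha0.1, ha0.2]
    ring
end

section
/- Weak UNSAT bound inductive step: Let V ⊆ (ℂ²)^{⊗N} be a subspace of dimension D, and let Π = Σ_{α=1}^r |φ^α⟩⟨φ^α| be a projector of rank r acting on a fixed k-qubit factor, with (φ^1,...,φ^r) a generic orthonormal r-frame in ℂ^{2^k}. Then dim(V ∩ ker Π) ≤ D(1 − r/2^k) for all frames outside a measure-zero set. -/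
set_option synthInstance.maxHeartbeats 1000000
set_option maxHeartbeats 1000000
set_option linter.unusedSectionVars false

/-- The matrix on `(ℂ²)^{⊗N} = ℂ^{2^k} ⊗ (ℂ²)^{⊗n}` of the rank-`r` projector
`Π = Σ_α |φ^α⟩⟨φ^α|` acting on the first `k` qubits, tensored with the identity. -/
noncomputable def frameProjector (k n r : ℕ) (φ : Fin r → (Fin k → Fin 2) → ℂ) :
    Matrix ((Fin k → Fin 2) × (Fin n → Fin 2)) ((Fin k → Fin 2) × (Fin n → Fin 2)) ℂ :=
  fun x y => if x.2 = y.2 then ∑ α, φ α x.1 * starRingEnd ℂ (φ α y.1) else 0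

/-- Real coordinates of an `r`-frame in `ℂ^{2^k}`. -/
noncomputable def frameCoords (k r : ℕ) (φ : Fin r → (Fin k → Fin 2) → ℂ) :
    Fin r × (Fin k → Fin 2) × Bool → ℝ := fun x =>
  if x.2.2 then (φ x.1 x.2.1).re else (φ x.1 x.2.1).im

open Module Matrix

namespace UnsatAux

variable {ι γ : Type*} [Fintype ι] [Fintype γ] [DecidableEq ι]

noncomputable def rowMap (γ : Type*) (f : ι) : ((ι × γ) → ℂ) →ₗ[ℂ] (γ → ℂ) :=
  LinearMap.funLeft ℂ ℂ (fun g => (f, g))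

@[simp] lemma rowMap_apply (f : ι) (v : (ι × γ) → ℂ) (g : γ) : rowMap γ f v g = v (f, g) := rfl

noncomputable def Ksub (γ : Type*) (S : Finset ι) : Submodule ℂ ((ι × γ) → ℂ) :=
  ⨅ f ∈ S, LinearMap.ker (rowMap γ f)

lemma mem_Ksub {S : Finset ι} {v : (ι × γ) → ℂ} :
    v ∈ Ksub γ S ↔ ∀ x : ι × γ, x.1 ∈ S → v x = 0 := by
  simp only [Ksub, Submodule.mem_iInf, LinearMap.mem_ker, funext_iff, rowMap_apply]
  constructor
  · intro h x hx
    simpa using h x.1 hx x.2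
  · intro h f hf g
    simpa using h (f, g) hf

lemma Ksub_empty : Ksub (ι := ι) γ ∅ = ⊤ := by
  ext v; simp [mem_Ksub]

lemma Ksub_insert (f0 : ι) (S : Finset ι) :
    Ksub γ (insert f0 S) = LinearMap.ker (rowMap γ f0) ⊓ Ksub γ S := by
  ext v
  simp only [mem_Ksub, Submodule.mem_inf, LinearMap.mem_ker, funext_iff, rowMap_apply,
    Finset.mem_insert, Pi.zero_apply]
  constructor
  · intro h
    exact ⟨fun g => h (f0, g) (Or.inl rfl), fun x hx => h x (Or.inr hx)⟩
  · rintro ⟨h1, h2⟩ x (hx | hx)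
    · rw [show x = (f0, x.2) by rw [← hx]]
      exact h1 x.2
    · exact h2 x hx

lemma finrank_le_sum_rank (T : Finset ι) :
    ∀ W : Submodule ℂ ((ι × γ) → ℂ), W ≤ Ksub γ Tᶜ →
      finrank ℂ W ≤ ∑ f ∈ T, finrank ℂ (LinearMap.range ((rowMap γ f).comp W.subtype)) := by
  induction T using Finset.induction_on with
  | empty =>
    intro W hW
    have : W = ⊥ := by
      rw [eq_bot_iff]
      intro v hv
      have := mem_Ksub.mp (hW hv)
      simp only [Submodule.mem_bot]
      funext x
      exact this x (by simp)
    simp [this]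
  | @insert f0 T hf0 ih =>
    intro W hW
    set L := (rowMap γ f0).comp W.subtype with hL
    set W' := Submodule.map W.subtype (LinearMap.ker L) with hW'def
    have hrn : finrank ℂ (LinearMap.range L) + finrank ℂ (LinearMap.ker L) = finrank ℂ W :=
      LinearMap.finrank_range_add_finrank_ker L
    have hker : finrank ℂ (LinearMap.ker L) = finrank ℂ W' :=
      (Submodule.equivMapOfInjective W.subtype (Submodule.injective_subtype W)
        (LinearMap.ker L)).finrank_eq
    have hW'le : W' ≤ Ksub γ Tᶜ := by
      rintro v ⟨w, hw, rfl⟩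
      rw [mem_Ksub]
      intro x hx
      by_cases hx0 : x.1 = f0
      · have h0 : L w = 0 := hw
        have h1 := congrFun h0 x.2
        have h2 : (w : (ι × γ) → ℂ) (f0, x.2) = 0 := by simpa [hL] using h1
        rw [show x = (f0, x.2) from by rw [← hx0]]
        exact h2
      · have hmem : x.1 ∈ (insert f0 T)ᶜ := by
          simp only [Finset.mem_compl, Finset.mem_insert, not_or]
          exact ⟨hx0, by simpa using hx⟩
        exact mem_Ksub.mp (hW w.2) x hmem
    have hsum := ih W' hW'le
    have hmono : ∀ f : ι, finrank ℂ (LinearMap.range ((rowMap γ f).comp W'.subtype)) ≤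
        finrank ℂ (LinearMap.range ((rowMap γ f).comp W.subtype)) := by
      intro f
      apply Submodule.finrank_mono
      rw [LinearMap.range_comp, LinearMap.range_comp, Submodule.range_subtype,
        Submodule.range_subtype]
      exact Submodule.map_mono (Submodule.map_subtype_le _ _)
    rw [Finset.sum_insert hf0]
    calc finrank ℂ W = finrank ℂ (LinearMap.range L) + finrank ℂ W' := by rw [← hker, hrn]
      _ ≤ finrank ℂ (LinearMap.range L) +
          ∑ f ∈ T, finrank ℂ (LinearMap.range ((rowMap γ f).comp W'.subtype)) :=
            Nat.add_le_add_left hsum _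
      _ ≤ _ := Nat.add_le_add_left (Finset.sum_le_sum fun f _ => hmono f) _

lemma finrank_inf_ker_add (W : Submodule ℂ ((ι × γ) → ℂ)) (f : ι) :
    finrank ℂ ↥(W ⊓ LinearMap.ker (rowMap γ f)) +
      finrank ℂ (LinearMap.range ((rowMap γ f).comp W.subtype)) = finrank ℂ W := by
  have h := LinearMap.finrank_range_add_finrank_ker ((rowMap γ f).comp W.subtype)
  rw [LinearMap.ker_comp] at h
  have e : finrank ℂ (Submodule.comap W.subtype (LinearMap.ker (rowMap γ f)))
      = finrank ℂ ↥(W ⊓ LinearMap.ker (rowMap γ f)) := by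
    rw [(Submodule.equivMapOfInjective W.subtype (Submodule.injective_subtype W)
      _).finrank_eq, Submodule.map_comap_subtype]
  rw [e] at h
  omega

lemma exists_good_row (S : Finset ι) (W : Submodule ℂ ((ι × γ) → ℂ)) (hW : W ≤ Ksub γ S)
    (hne : Sᶜ.Nonempty) :
    ∃ f0 ∈ Sᶜ, Sᶜ.card * finrank ℂ ↥(W ⊓ LinearMap.ker (rowMap γ f0)) ≤
      (Sᶜ.card - 1) * finrank ℂ W := by
  have h1 := finrank_le_sum_rank Sᶜ W (by rwa [compl_compl])
  apply Finset.exists_le_of_sum_le hne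
  have h2 : ∑ f ∈ Sᶜ, (finrank ℂ ↥(W ⊓ LinearMap.ker (rowMap γ f)) +
      finrank ℂ (LinearMap.range ((rowMap γ f).comp W.subtype))) = Sᶜ.card * finrank ℂ W := by
    rw [Finset.sum_congr rfl fun f _ => finrank_inf_ker_add W f]
    simp [Finset.sum_const, mul_comm]
  rw [Finset.sum_add_distrib] at h2
  have h3 : ∑ f ∈ Sᶜ, finrank ℂ ↥(W ⊓ LinearMap.ker (rowMap γ f)) ≤
      (Sᶜ.card - 1) * finrank ℂ W := by
    rw [Nat.sub_one_mul]
    omega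
  calc ∑ f ∈ Sᶜ, Sᶜ.card * finrank ℂ ↥(W ⊓ LinearMap.ker (rowMap γ f))
      = Sᶜ.card * ∑ f ∈ Sᶜ, finrank ℂ ↥(W ⊓ LinearMap.ker (rowMap γ f)) := by
        rw [Finset.mul_sum]
    _ ≤ Sᶜ.card * ((Sᶜ.card - 1) * finrank ℂ W) := Nat.mul_le_mul_left _ h3
    _ = ∑ _f ∈ Sᶜ, (Sᶜ.card - 1) * finrank ℂ W := by simp [Finset.sum_const, mul_comm]

lemma exists_good_set (r' : ℕ) : ∀ (S : Finset ι) (W : Submodule ℂ ((ι × γ) → ℂ)),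
    W ≤ Ksub γ S → r' ≤ Sᶜ.card →
    ∃ T : Finset ι, T ⊆ Sᶜ ∧ T.card = r' ∧
      Sᶜ.card * finrank ℂ ↥(W ⊓ Ksub γ T) ≤ (Sᶜ.card - r') * finrank ℂ W := by
  induction r' with
  | zero =>
    intro S W hW _
    exact ⟨∅, by simp, by simp, by rw [Ksub_empty, inf_top_eq]; simp⟩
  | succ r' ih =>
    intro S W hW hle
    have hne : Sᶜ.Nonempty := Finset.card_pos.mp (by omega)
    obtain ⟨f0, hf0, hgood⟩ := exists_good_row S W hW hne
    set W' := W ⊓ LinearMap.ker (rowMap γ f0) with hW'def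
    have hW' : W' ≤ Ksub γ (insert f0 S) := by
      rw [Ksub_insert]
      exact le_inf inf_le_right (le_trans inf_le_left hW)
    have hcard : (insert f0 S)ᶜ.card = Sᶜ.card - 1 := by
      rw [Finset.compl_insert]
      exact Finset.card_erase_of_mem hf0
    obtain ⟨T', hT'sub, hT'card, hT'⟩ := ih (insert f0 S) W' hW' (by omega)
    have hf0T' : f0 ∉ T' := by
      intro h
      have := hT'sub h
      simp at this
    refine ⟨insert f0 T', ?_, ?_, ?_⟩
    · intro x hx
      rcases Finset.mem_insert.mp hx with h | h
      · rwa [h]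
      · have := hT'sub h
        simp only [Finset.mem_compl, Finset.mem_insert, not_or] at this
        simpa using this.2
    · rw [Finset.card_insert_of_notMem hf0T', hT'card]
    · have hKeq : W ⊓ Ksub γ (insert f0 T') = W' ⊓ Ksub γ T' := by
        rw [Ksub_insert, hW'def, ← inf_assoc]
      rw [hKeq]
      rw [hcard] at hT'
      set m := Sᶜ.card
      set X := finrank ℂ ↥(W' ⊓ Ksub γ T')
      set Y := finrank ℂ ↥W'
      set Z := finrank ℂ ↥W
      have hXY : X ≤ Y := Submodule.finrank_mono inf_le_left
      -- hT' : (m - 1) * X ≤ (m - 1 - r') * Y ; hgood : m * Y ≤ (m - 1) * Z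
      rcases Nat.lt_or_ge 1 m with hm | hm
      · have step : (m - 1) * (m * X) ≤ (m - 1) * ((m - (r' + 1)) * Z) := by
          calc (m - 1) * (m * X) = m * ((m - 1) * X) := by ring
            _ ≤ m * ((m - 1 - r') * Y) := Nat.mul_le_mul_left _ hT'
            _ = (m - 1 - r') * (m * Y) := by ring
            _ ≤ (m - 1 - r') * ((m - 1) * Z) := Nat.mul_le_mul_left _ hgood
            _ = (m - 1) * ((m - (r' + 1)) * Z) := by
                have : m - 1 - r' = m - (r' + 1) := by omega
                rw [this]; ring
        exact Nat.le_of_mul_le_mul_left step (by omega)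
      · have hm1 : m = 1 := by omega
        have hr0 : r' = 0 := by omega
        have hY0 : Y = 0 := by
          have h := hgood
          rw [hm1] at h
          simpa using h
        have hX0 : X = 0 := by omega
        rw [hX0, Nat.mul_zero]
        exact Nat.zero_le _



variable {I' m' : Type*} [Fintype I'] [Fintype m'] [DecidableEq I'] [DecidableEq m']

lemma exists_indep_cols (M : Matrix I' m' ℂ) (q : ℕ) (h : M.rank = q) :
    ∃ c : Fin q → m', LinearIndependent ℂ (fun j => Mᵀ (c j)) := by
  obtain ⟨s, hsub, hspan, hind⟩ := exists_linearIndependent ℂ (Set.range Mᵀ)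
  have hfin : s.Finite := LinearIndependent.setFinite hind
  haveI : Fintype s := hfin.fintype
  have hcard : s.toFinset.card = q := by
    rw [← finrank_span_set_eq_card hind, hspan]
    rw [Matrix.rank_eq_finrank_span_cols] at h; exact h
  let e : s.toFinset ≃ Fin q := s.toFinset.equivFinOfCardEq hcard
  have hmem : ∀ j : Fin q, ((e.symm j).1) ∈ Set.range Mᵀ := by
    intro j
    apply hsub
    exact Set.mem_toFinset.mp (e.symm j).2
  choose c hc using hmem
  refine ⟨c, ?_⟩
  have : (fun j => Mᵀ (c j)) = fun j => ((e.symm j).1) := by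
    funext j; exact hc j
  rw [this]
  have hji : Function.Injective (fun j : Fin q => (⟨(e.symm j).1,
      Set.mem_toFinset.mp (e.symm j).2⟩ : s)) := by
    intro j1 j2 hj
    exact e.symm.injective (Subtype.ext (Subtype.mk_eq_mk.mp hj))
  exact hind.comp _ hji

lemma exists_sq_minor (M : Matrix I' m' ℂ) (q : ℕ) (h : M.rank = q) :
    ∃ (ρ : Fin q → I') (c : Fin q → m'), (M.submatrix ρ c).det ≠ 0 := by
  obtain ⟨c, hc⟩ := exists_indep_cols M q h
  set N : Matrix I' (Fin q) ℂ := M.submatrix id c with hN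
  have hNT : Nᵀ = fun j => Mᵀ (c j) := by
    funext j x; rfl
  have hrankN : N.rank = q := by
    rw [Matrix.rank_eq_finrank_span_cols]
    change finrank ℂ (Submodule.span ℂ (Set.range Nᵀ)) = q
    rw [hNT, finrank_span_eq_card hc, Fintype.card_fin]
  have hrankNT : Nᵀ.rank = q := by rw [Matrix.rank_transpose, hrankN]
  obtain ⟨ρ, hρ⟩ := exists_indep_cols Nᵀ q hrankNT
  rw [Matrix.transpose_transpose] at hρ
  -- rows of N.submatrix ρ id are linearly independent
  have hrows : LinearIndependent ℂ (fun i => (N.submatrix ρ id) i) := by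
    have : (fun i : Fin q => (N.submatrix ρ id) i) = fun i => N (ρ i) := by
      funext i j; rfl
    rw [this]; exact hρ
  have hunit : IsUnit (N.submatrix ρ id) := Matrix.linearIndependent_rows_iff_isUnit.mp hrows
  refine ⟨ρ, c, ?_⟩
  have : N.submatrix ρ id = M.submatrix ρ c := by funext i j; rfl
  rw [← this]
  exact (Matrix.isUnit_iff_isUnit_det _ |>.mp hunit).ne_zero

lemma rank_ge_of_minor (M : Matrix I' m' ℂ) (q : ℕ) (ρ : Fin q → I') (c : Fin q → m')
    (h : (M.submatrix ρ c).det ≠ 0) : q ≤ M.rank := by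
  set P : Matrix (Fin q) I' ℂ := fun i x => if x = ρ i then 1 else 0 with hP
  set Q : Matrix m' (Fin q) ℂ := fun y j => if y = c j then 1 else 0 with hQ
  have key : P * M * Q = M.submatrix ρ c := by
    funext i j
    simp only [Matrix.mul_apply]
    simp only [Matrix.mul_apply, hP, hQ, ite_mul, one_mul, zero_mul, mul_ite, mul_one, mul_zero,
      Finset.sum_ite_eq, Finset.sum_ite_eq', Finset.mem_univ, if_true, Matrix.submatrix_apply]
  have hrk : (P * M * Q).rank = q := by
    rw [key]
    rw [Matrix.rank_of_isUnit _ ((Matrix.isUnit_iff_isUnit_det _).mpr (isUnit_iff_ne_zero.mpr h))]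
    simp
  calc q = (P * M * Q).rank := hrk.symm
    _ ≤ (P * M).rank := Matrix.rank_mul_le_left _ _
    _ ≤ M.rank := Matrix.rank_mul_le_right _ _

/-- Real-part-of-coefficients of a complex multivariate polynomial. -/
noncomputable def reCoeff {σ : Type*} (P : MvPolynomial σ ℂ) : MvPolynomial σ ℝ :=
  AddMonoidAlgebra.ofCoeff (Finsupp.mapRange Complex.re Complex.zero_re (AddMonoidAlgebra.coeff P))

lemma coeff_reCoeff {σ : Type*} (P : MvPolynomial σ ℂ) (d : σ →₀ ℕ) :
    (reCoeff P).coeff d = (P.coeff d).re := rfl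

lemma support_reCoeff {σ : Type*} (P : MvPolynomial σ ℂ) :
    (reCoeff P).support ⊆ P.support := Finsupp.support_mapRange (hf := Complex.zero_re)

lemma eval_reCoeff {σ : Type*} (P : MvPolynomial σ ℂ) (x : σ → ℝ) :
    MvPolynomial.eval x (reCoeff P) = (MvPolynomial.eval (fun i => (x i : ℂ)) P).re := by
  rw [MvPolynomial.eval_eq, MvPolynomial.eval_eq]
  rw [Finset.sum_subset (support_reCoeff P) (fun d _ hd => by
    have h0 := MvPolynomial.notMem_support_iff.mp hd
    rw [h0, zero_mul])]
  rw [Complex.re_sum]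
  apply Finset.sum_congr rfl
  intro d _
  rw [coeff_reCoeff]
  have hcast : (∏ i ∈ d.support, ((x i : ℂ)) ^ d i)
      = ((∏ i ∈ d.support, x i ^ d i : ℝ) : ℂ) := by
    push_cast; ring
  rw [hcast, Complex.mul_re, Complex.ofReal_re, Complex.ofReal_im, mul_zero, sub_zero]

lemma eval_conj_map {σ : Type*} (P : MvPolynomial σ ℂ) (x : σ → ℝ) :
    MvPolynomial.eval (fun i => (x i : ℂ)) (MvPolynomial.map (starRingEnd ℂ) P) =
      starRingEnd ℂ (MvPolynomial.eval (fun i => (x i : ℂ)) P) := by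
  rw [MvPolynomial.eval_map]
  have hx : (⇑(starRingEnd ℂ) ∘ fun i => ((x i : ℂ))) = fun i => ((x i : ℂ)) := by
    funext i; simp [Complex.conj_ofReal]
  have h := MvPolynomial.eval₂_comp_left (starRingEnd ℂ) (RingHom.id ℂ)
    (fun i => (x i : ℂ)) P
  rw [RingHom.comp_id, hx] at h
  exact h.symm

lemma eval_normSq {σ : Type*} (P : MvPolynomial σ ℂ) (x : σ → ℝ) :
    MvPolynomial.eval x (reCoeff (P * MvPolynomial.map (starRingEnd ℂ) P)) =
      Complex.normSq (MvPolynomial.eval (fun i => (x i : ℂ)) P) := by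
  rw [eval_reCoeff, _root_.map_mul, eval_conj_map, Complex.mul_conj, Complex.ofReal_re]



section BasisMat

variable {κ : Type*} [Fintype κ] [DecidableEq κ]

/-- Matrix whose columns are a basis of the subspace `V`. -/
noncomputable def basisMat (V : Submodule ℂ (κ → ℂ)) : Matrix κ (Fin (finrank ℂ V)) ℂ :=
  fun x j => ((Module.finBasis ℂ V j : κ → ℂ)) x

lemma toLin'_basisMat_range (V : Submodule ℂ (κ → ℂ)) :
    LinearMap.range (Matrix.toLin' (basisMat V)) = V := by
  rw [Matrix.toLin'_apply', Matrix.range_mulVecLin]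
  have ht : (basisMat V).col = (V.subtype : V →ₗ[ℂ] (κ → ℂ)) ∘ (Module.finBasis ℂ V) := rfl
  rw [ht, Set.range_comp, Submodule.span_image, Module.Basis.span_eq, Submodule.map_top,
    Submodule.range_subtype]

lemma toLin'_basisMat_inj (V : Submodule ℂ (κ → ℂ)) :
    Function.Injective (Matrix.toLin' (basisMat V)) := by
  have hli : LinearIndependent ℂ (fun j => ((Module.finBasis ℂ V j : V) : κ → ℂ)) :=
    (Module.finBasis ℂ V).linearIndependent.map' V.subtype (Submodule.ker_subtype V)
  rw [← LinearMap.ker_eq_bot, eq_bot_iff]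
  intro cvec hc
  simp only [LinearMap.mem_ker, Matrix.toLin'_apply] at hc
  have hBsum : ∑ j, cvec j • ((Module.finBasis ℂ V j : V) : κ → ℂ) = basisMat V *ᵥ cvec := by
    funext x
    simp [basisMat, Matrix.mulVec, dotProduct, mul_comm]
  have h0 : ∑ j, cvec j • ((Module.finBasis ℂ V j : V) : κ → ℂ) = 0 := by rw [hBsum, hc]
  have hz := Fintype.linearIndependent_iff.mp hli cvec h0
  exact (Submodule.mem_bot ℂ).mpr (funext hz)

lemma dim_identity (V : Submodule ℂ (κ → ℂ)) (A : Matrix κ κ ℂ) :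
    finrank ℂ ↥(V ⊓ LinearMap.ker (Matrix.toLin' A)) + (A * basisMat V).rank
      = finrank ℂ ↥V := by
  have hrn := LinearMap.finrank_range_add_finrank_ker (Matrix.toLin' (A * basisMat V))
  rw [Module.finrank_pi, Fintype.card_fin] at hrn
  have hker : finrank ℂ (LinearMap.ker (Matrix.toLin' (A * basisMat V)))
      = finrank ℂ ↥(V ⊓ LinearMap.ker (Matrix.toLin' A)) := by
    rw [Matrix.toLin'_mul, LinearMap.ker_comp,
      (Submodule.equivMapOfInjective _ (toLin'_basisMat_inj V) _).finrank_eq,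
      Submodule.map_comap_eq, toLin'_basisMat_range]
  have hrange : (A * basisMat V).rank
      = finrank ℂ (LinearMap.range (Matrix.toLin' (A * basisMat V))) := by
    rw [Matrix.rank, Matrix.toLin'_apply']
  omega

end BasisMat

section StdFrame

variable {k n r : ℕ}

/-- The frame consisting of standard basis vectors indexed by `s`. -/
noncomputable def stdFrame (s : Fin r → (Fin k → Fin 2)) : Fin r → (Fin k → Fin 2) → ℂ :=
  fun α f => if f = s α then 1 else 0

lemma stdFrame_orthonormal (s : Fin r → (Fin k → Fin 2)) (hs : Function.Injective s) :
    ∀ α β, ∑ f, starRingEnd ℂ (stdFrame s α f) * stdFrame s β f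
      = if α = β then (1 : ℂ) else 0 := by
  intro α β
  have hterm : ∀ f, starRingEnd ℂ (stdFrame s α f) * stdFrame s β f
      = if f = s α then (if f = s β then (1:ℂ) else 0) else 0 := by
    intro f
    by_cases h1 : f = s α <;> by_cases h2 : f = s β <;> simp [stdFrame, h1, h2]
  rw [Finset.sum_congr rfl (fun f _ => hterm f),
    Finset.sum_ite_eq' Finset.univ (s α) (fun f => if f = s β then (1:ℂ) else 0)]
  by_cases h : α = β
  · simp [h]
  · have : s α ≠ s β := fun hc => h (hs hc)
    simp [this, h]

lemma frameProjector_stdFrame (s : Fin r → (Fin k → Fin 2)) (hs : Function.Injective s)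
    (x y : (Fin k → Fin 2) × (Fin n → Fin 2)) :
    frameProjector k n r (stdFrame s) x y
      = if x = y ∧ x.1 ∈ Finset.image s Finset.univ then 1 else 0 := by
  unfold frameProjector stdFrame
  by_cases h2 : x.2 = y.2
  · rw [if_pos h2]
    have hterm : ∀ α : Fin r, (if x.1 = s α then (1:ℂ) else 0) *
        starRingEnd ℂ (if y.1 = s α then (1:ℂ) else 0)
        = if x.1 = s α then (if y.1 = s α then (1:ℂ) else 0) else 0 := by
      intro α
      by_cases hx : x.1 = s α <;> by_cases hy : y.1 = s α <;> simp [hx, hy]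
    rw [Finset.sum_congr rfl (fun α _ => hterm α)]
    by_cases hmem : x.1 ∈ Finset.image s Finset.univ
    · obtain ⟨α0, _, hα0⟩ := Finset.mem_image.mp hmem
      rw [Finset.sum_eq_single α0]
      · rw [if_pos hα0.symm]
        by_cases hxy : x = y
        · subst hxy
          have hcond : x = x ∧ x.1 ∈ Finset.image s Finset.univ := ⟨rfl, hmem⟩
          rw [if_pos hα0.symm, if_pos hcond]
        · rw [if_neg (fun hc => hxy (Prod.ext (hc.trans hα0).symm h2)),
            if_neg (fun hcon => hxy hcon.1)]
      · intro β _ hβ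
        have hxs : x.1 ≠ s β := fun hc => hβ (hs (hc.symm.trans hα0.symm))
        rw [if_neg hxs]
      · intro h; exact absurd (Finset.mem_univ α0) h
    · have : ∀ α : Fin r, x.1 ≠ s α := by
        intro α hc
        exact hmem (Finset.mem_image.mpr ⟨α, Finset.mem_univ α, hc.symm⟩)
      simp [this, hmem]
  · rw [if_neg h2, eq_comm]
    have : x ≠ y := fun hc => h2 (by rw [hc])
    simp [this]

lemma toLin'_frameProjector_stdFrame (s : Fin r → (Fin k → Fin 2))
    (hs : Function.Injective s) (v : ((Fin k → Fin 2) × (Fin n → Fin 2)) → ℂ)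
    (x : (Fin k → Fin 2) × (Fin n → Fin 2)) :
    Matrix.toLin' (frameProjector k n r (stdFrame s)) v x
      = if x.1 ∈ Finset.image s Finset.univ then v x else 0 := by
  rw [Matrix.toLin'_apply]
  show ∑ y, frameProjector k n r (stdFrame s) x y * v y = _
  rw [Finset.sum_congr rfl (fun y _ => by rw [frameProjector_stdFrame s hs x y])]
  by_cases hmem : x.1 ∈ Finset.image s Finset.univ
  · rw [if_pos hmem]
    have hterm : ∀ y, (if x = y ∧ x.1 ∈ Finset.image s Finset.univ then (1:ℂ) else 0) * v y
        = if x = y then v y else 0 := by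
      intro y
      by_cases hxy : x = y
      · have hcond : x = y ∧ x.1 ∈ Finset.image s Finset.univ := ⟨hxy, hmem⟩
        rw [if_pos hcond, if_pos hxy, one_mul]
      · rw [if_neg (fun h => hxy h.1), if_neg hxy, zero_mul]
    rw [Finset.sum_congr rfl (fun y _ => hterm y), Finset.sum_ite_eq]
    simp
  · rw [if_neg hmem]
    have hterm : ∀ y,
        (if x = y ∧ x.1 ∈ Finset.image s Finset.univ then (1:ℂ) else 0) * v y = 0 := by
      intro y
      rw [if_neg (fun h => hmem h.2), zero_mul]
    rw [Finset.sum_congr rfl (fun y _ => hterm y), Finset.sum_const_zero]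

lemma ker_frameProjector_stdFrame (s : Fin r → (Fin k → Fin 2)) (hs : Function.Injective s) :
    LinearMap.ker (Matrix.toLin' (frameProjector k n r (stdFrame s)))
      = Ksub (Fin n → Fin 2) (Finset.image s Finset.univ) := by
  ext v
  rw [LinearMap.mem_ker, mem_Ksub]
  constructor
  · intro h x hx
    have := congrFun h x
    rw [toLin'_frameProjector_stdFrame s hs, if_pos hx] at this
    exact this
  · intro h
    funext x
    rw [toLin'_frameProjector_stdFrame s hs]
    by_cases hx : x.1 ∈ Finset.image s Finset.univ
    · rw [if_pos hx]; exact h x hx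
    · rw [if_neg hx]; rfl

end StdFrame

end UnsatAux

/-- Weak UNSAT bound, inductive step: for a subspace `V ⊆ (ℂ²)^{⊗N}` of dimension `D`
and a generic rank-`r` projector `Π` on a fixed `k`-qubit factor — generic meaning away
from the zero set of a polynomial not identically zero on the manifold of orthonormal
`r`-frames — we have `dim (V ∩ ker Π) ≤ D (1 − r/2^k)`. -/
theorem stmt11 (k n r D : ℕ) (hr : 0 < r) (hrk : r ≤ 2 ^ k)
    (V : Submodule ℂ (((Fin k → Fin 2) × (Fin n → Fin 2)) → ℂ))
    (hV : Module.finrank ℂ V = D) :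
    ∃ p : MvPolynomial (Fin r × (Fin k → Fin 2) × Bool) ℝ,
      (∃ φ : Fin r → (Fin k → Fin 2) → ℂ,
        (∀ α β, ∑ f, starRingEnd ℂ (φ α f) * φ β f = if α = β then 1 else 0) ∧
        MvPolynomial.eval (frameCoords k r φ) p ≠ 0) ∧
      ∀ φ : Fin r → (Fin k → Fin 2) → ℂ,
        (∀ α β, ∑ f, starRingEnd ℂ (φ α f) * φ β f = if α = β then 1 else 0) →
        MvPolynomial.eval (frameCoords k r φ) p ≠ 0 →
        2 ^ k * Module.finrank ℂ
            ↥(V ⊓ LinearMap.ker (Matrix.toLin' (frameProjector k n r φ))) ≤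
          (2 ^ k - r) * D := by
  classical
  subst hV
  have hcard_univ : ((∅ : Finset (Fin k → Fin 2))ᶜ).card = 2 ^ k := by
    simp [Finset.card_univ, Fintype.card_fun]
  obtain ⟨T, hTsub, hTcard, hTdim⟩ := UnsatAux.exists_good_set (γ := Fin n → Fin 2) r ∅ V
    (by rw [UnsatAux.Ksub_empty]; exact le_top)
    (by rw [hcard_univ]; exact hrk)
  rw [hcard_univ] at hTdim
  set d := Module.finrank ℂ ↥(V ⊓ UnsatAux.Ksub (Fin n → Fin 2) T) with hd_def
  have hdD : d ≤ Module.finrank ℂ ↥V := Submodule.finrank_mono inf_le_left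
  set q := Module.finrank ℂ ↥V - d with hq_def
  -- the reference frame made of standard basis vectors indexed by `T`
  let eT : {x // x ∈ T} ≃ Fin r := T.equivFinOfCardEq hTcard
  let s : Fin r → (Fin k → Fin 2) := fun α => (eT.symm α).1
  have hs : Function.Injective s := fun a b hab => eT.symm.injective (Subtype.ext hab)
  have hT_img : Finset.image s Finset.univ = T := by
    apply Finset.eq_of_subset_of_card_le
    · intro f hf
      obtain ⟨α, _, rfl⟩ := Finset.mem_image.mp hf
      exact (eT.symm α).2
    · rw [Finset.card_image_of_injective _ hs, Finset.card_univ, Fintype.card_fin, hTcard]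
  have hker0 : LinearMap.ker (Matrix.toLin' (frameProjector k n r (UnsatAux.stdFrame s)))
      = UnsatAux.Ksub (Fin n → Fin 2) T := by
    rw [UnsatAux.ker_frameProjector_stdFrame s hs, hT_img]
  have hrank0 : (frameProjector k n r (UnsatAux.stdFrame s) * UnsatAux.basisMat V).rank = q := by
    have hid := UnsatAux.dim_identity V (frameProjector k n r (UnsatAux.stdFrame s))
    rw [hker0] at hid
    omega
  obtain ⟨ρ, c, hminor⟩ := UnsatAux.exists_sq_minor _ q hrank0
  -- the polynomial
  let zp : Fin r → (Fin k → Fin 2) → MvPolynomial (Fin r × (Fin k → Fin 2) × Bool) ℂ :=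
    fun α f => MvPolynomial.X (α, f, true) + MvPolynomial.C Complex.I * MvPolynomial.X (α, f, false)
  let zb : Fin r → (Fin k → Fin 2) → MvPolynomial (Fin r × (Fin k → Fin 2) × Bool) ℂ :=
    fun α f => MvPolynomial.X (α, f, true) - MvPolynomial.C Complex.I * MvPolynomial.X (α, f, false)
  let entry : ((Fin k → Fin 2) × (Fin n → Fin 2)) → ((Fin k → Fin 2) × (Fin n → Fin 2)) →
      MvPolynomial (Fin r × (Fin k → Fin 2) × Bool) ℂ := fun x y =>
    if x.2 = y.2 then ∑ α, zp α x.1 * zb α y.1 else 0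
  let Mp : Matrix (Fin q) (Fin q) (MvPolynomial (Fin r × (Fin k → Fin 2) × Bool) ℂ) :=
    fun i j => ∑ y, entry (ρ i) y * MvPolynomial.C (UnsatAux.basisMat V y (c j))
  let Pd := Mp.det
  have hPd : ∀ φ : Fin r → (Fin k → Fin 2) → ℂ,
      MvPolynomial.eval (fun v => ((frameCoords k r φ v : ℝ) : ℂ)) Pd
        = ((frameProjector k n r φ * UnsatAux.basisMat V).submatrix ρ c).det := by
    intro φ
    have hz : ∀ (α : Fin r) (f : Fin k → Fin 2),
        MvPolynomial.eval (fun v => ((frameCoords k r φ v : ℝ) : ℂ)) (zp α f) = φ α f := by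
      intro α f
      simp only [zp, map_add, _root_.map_mul, MvPolynomial.eval_X, MvPolynomial.eval_C]
      beta_reduce
      have h1 : frameCoords k r φ (α, f, true) = (φ α f).re := rfl
      have h2 : frameCoords k r φ (α, f, false) = (φ α f).im := rfl
      rw [h1, h2, mul_comm]
      exact Complex.re_add_im _
    have hzb : ∀ (α : Fin r) (f : Fin k → Fin 2),
        MvPolynomial.eval (fun v => ((frameCoords k r φ v : ℝ) : ℂ)) (zb α f)
          = starRingEnd ℂ (φ α f) := by
      intro α f
      simp only [zb, map_sub, _root_.map_mul, MvPolynomial.eval_X, MvPolynomial.eval_C]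
      beta_reduce
      have h1 : frameCoords k r φ (α, f, true) = (φ α f).re := rfl
      have h2 : frameCoords k r φ (α, f, false) = (φ α f).im := rfl
      rw [h1, h2]
      simp [Complex.ext_iff]
    have hentry : ∀ x y,
        MvPolynomial.eval (fun v => ((frameCoords k r φ v : ℝ) : ℂ)) (entry x y)
          = frameProjector k n r φ x y := by
      intro x y
      simp only [entry, frameProjector]
      split_ifs with h
      · rw [map_sum]
        exact Finset.sum_congr rfl (fun α _ => by rw [_root_.map_mul, hz, hzb])
      · rw [map_zero]
    have hmap : Mp.map (MvPolynomial.eval fun v => ((frameCoords k r φ v : ℝ) : ℂ))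
        = ((frameProjector k n r φ * UnsatAux.basisMat V).submatrix ρ c) := by
      funext i j
      simp only [Matrix.map_apply, Matrix.submatrix_apply, Matrix.mul_apply]
      simp only [Matrix.map_apply, Mp, map_sum, _root_.map_mul, MvPolynomial.eval_C,
        Matrix.submatrix_apply, Matrix.mul_apply]
      exact Finset.sum_congr rfl (fun y _ => by rw [hentry])
    show (MvPolynomial.eval fun v => ((frameCoords k r φ v : ℝ) : ℂ)) Mp.det = _
    rw [RingHom.map_det, RingHom.mapMatrix_apply, hmap]
  refine ⟨UnsatAux.reCoeff (Pd * MvPolynomial.map (starRingEnd ℂ) Pd), ?_, ?_⟩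
  · refine ⟨UnsatAux.stdFrame s, UnsatAux.stdFrame_orthonormal s hs, ?_⟩
    rw [UnsatAux.eval_normSq, hPd]
    exact fun h => hminor (Complex.normSq_eq_zero.mp h)
  · intro φ _ hne
    rw [UnsatAux.eval_normSq, hPd φ] at hne
    have hdet : ((frameProjector k n r φ * UnsatAux.basisMat V).submatrix ρ c).det ≠ 0 :=
      fun h => hne (by rw [h]; simp)
    have hrk := UnsatAux.rank_ge_of_minor _ q ρ c hdet
    have hident := UnsatAux.dim_identity V (frameProjector k n r φ)
    have hle : Module.finrank ℂ
        ↥(V ⊓ LinearMap.ker (Matrix.toLin' (frameProjector k n r φ))) ≤ d := by omega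
    exact le_trans (Nat.mul_le_mul_left (2 ^ k) hle) hTdim
end

section
/- Weak UNSAT bound: For an instance of random (k,r)-QSAT with M clauses on N qubits, where each clause is a Haar-random rank-r projector on a k-subset of qubits, the dimension of the zero-energy space satisfies dim ker(H) ≤ 2^N (1 − r/2^k)^M with probability 1. Consequently, if M > N / (−log₂(1 − r/2^k)) then H has no zero-energy state with probability 1. -/
/-- The matrix (in the computational basis of `(ℂ²)^{⊗N}`) of the rank-`r` projector
`Π = Σ_α |φ^α⟩⟨φ^α|` on the qubits `S 0, ..., S (k-1)`, tensored with the identity. -/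
noncomputable def clauseMatrixR (N k r : ℕ) (S : Fin k → Fin N)
    (φ : Fin r → (Fin k → Fin 2) → ℂ) :
    Matrix (Fin N → Fin 2) (Fin N → Fin 2) ℂ := fun g g' =>
  if ∀ i : Fin N, (∀ j : Fin k, S j ≠ i) → g i = g' i
    then ∑ α, φ α (g ∘ S) * starRingEnd ℂ (φ α (g' ∘ S)) else 0

/-- Real coordinates of the collection of `r`-frames defining the clauses. -/
noncomputable def allFrameCoords (k r M : ℕ)
    (φ : Fin M → Fin r → (Fin k → Fin 2) → ℂ) :
    Fin M × Fin r × (Fin k → Fin 2) × Bool → ℝ := fun x =>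
  if x.2.2.2 then (φ x.1 x.2.1 x.2.2.1).re else (φ x.1 x.2.1 x.2.2.1).im

open Finset

section Aux

set_option linter.unusedSectionVars false
variable {G β : Type*} [Fintype G] [DecidableEq G] [Fintype β] [DecidableEq β]

lemma submatrix_as_mul (A : Matrix G G ℂ) (ι : β → G) :
    A.submatrix ι ι = (Matrix.of fun (i : β) (j : G) => if ι i = j then (1:ℂ) else 0) * A *
      (Matrix.of fun (i : G) (j : β) => if i = ι j then (1:ℂ) else 0) := by
  ext i j
  simp [Matrix.mul_apply, ite_mul, mul_ite, Finset.sum_ite_eq, Finset.sum_ite_eq']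

lemma card_le_rank_of_submatrix_det_ne_zero (A : Matrix G G ℂ) (ι : β → G)
    (h : (A.submatrix ι ι).det ≠ 0) : Fintype.card β ≤ A.rank := by
  have hsub : (A.submatrix ι ι).rank = Fintype.card β :=
    Matrix.rank_of_isUnit _ ((Matrix.isUnit_iff_isUnit_det _).mpr (isUnit_iff_ne_zero.mpr h))
  rw [← hsub, submatrix_as_mul A ι]
  exact le_trans (Matrix.rank_mul_le_left _ _) (Matrix.rank_mul_le_right _ _)

lemma finrank_ker_toLin' (A : Matrix G G ℂ) :
    Module.finrank ℂ (LinearMap.ker (Matrix.toLin' A)) = Fintype.card G - A.rank := by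
  have h1 : Matrix.toLin' A = A.mulVecLin := by
    ext v
    simp [Matrix.toLin'_apply, Matrix.mulVecLin_apply]
  have h2 := LinearMap.finrank_range_add_finrank_ker (Matrix.toLin' A)
  rw [h1] at h2 ⊢
  have h3 : Module.finrank ℂ (G → ℂ) = Fintype.card G := Module.finrank_pi ℂ
  rw [h3] at h2
  have : A.rank = Module.finrank ℂ (LinearMap.range A.mulVecLin) := rfl
  omega

end Aux

section RePart

variable {σ : Type*}

noncomputable def rePart (Q : MvPolynomial σ ℂ) : MvPolynomial σ ℝ :=
  AddMonoidAlgebra.ofCoeff (Finsupp.mapRange Complex.re Complex.zero_re (AddMonoidAlgebra.coeff Q))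

lemma coeff_rePart (Q : MvPolynomial σ ℂ) (d : σ →₀ ℕ) :
    (rePart Q).coeff d = (Q.coeff d).re := rfl

lemma support_rePart (Q : MvPolynomial σ ℂ) : (rePart Q).support ⊆ Q.support :=
  Finsupp.support_mapRange (hf := Complex.zero_re)

lemma eval_rePart (x : σ → ℝ) (Q : MvPolynomial σ ℂ) :
    MvPolynomial.eval x (rePart Q)
      = (MvPolynomial.eval (fun s => (x s : ℂ)) Q).re := by
  rw [MvPolynomial.eval_eq, MvPolynomial.eval_eq, Complex.re_sum]
  rw [Finset.sum_subset (support_rePart Q) (fun d _ hd => by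
    rw [MvPolynomial.notMem_support_iff.mp hd, zero_mul])]
  apply Finset.sum_congr rfl
  intro d _
  rw [coeff_rePart]
  have : ∏ i ∈ d.support, ((x i : ℂ)) ^ d i = ((∏ i ∈ d.support, x i ^ d i : ℝ) : ℂ) := by
    push_cast; rfl
  rw [this, mul_comm (MvPolynomial.coeff d Q), Complex.re_ofReal_mul]
  exact mul_comm _ _

lemma eval_map_conj (x : σ → ℝ) (q : MvPolynomial σ ℂ) :
    MvPolynomial.eval (fun s => (x s : ℂ)) (MvPolynomial.map (starRingEnd ℂ) q)
      = starRingEnd ℂ (MvPolynomial.eval (fun s => (x s : ℂ)) q) := by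
  rw [MvPolynomial.eval_map]
  have h := MvPolynomial.eval₂_comp_left (starRingEnd ℂ) (RingHom.id ℂ)
    (fun s => (x s : ℂ)) q
  rw [MvPolynomial.eval, MvPolynomial.coe_eval₂Hom, h]
  congr 1
  funext s
  simp

end RePart

section Poly

open MvPolynomial

noncomputable def Zp (k r M : ℕ) (m : Fin M) (α : Fin r) (f : Fin k → Fin 2) :
    MvPolynomial (Fin M × Fin r × (Fin k → Fin 2) × Bool) ℂ :=
  X (m, α, f, true) + C Complex.I * X (m, α, f, false)

noncomputable def Zbp (k r M : ℕ) (m : Fin M) (α : Fin r) (f : Fin k → Fin 2) :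
    MvPolynomial (Fin M × Fin r × (Fin k → Fin 2) × Bool) ℂ :=
  X (m, α, f, true) - C Complex.I * X (m, α, f, false)

/-- complexified coordinates of the frames -/
noncomputable def coordsC (k r M : ℕ) (φ : Fin M → Fin r → (Fin k → Fin 2) → ℂ) :
    Fin M × Fin r × (Fin k → Fin 2) × Bool → ℂ := fun x =>
  ((allFrameCoords k r M φ x : ℝ) : ℂ)

lemma eval_Zp (k r M : ℕ) (φ : Fin M → Fin r → (Fin k → Fin 2) → ℂ)
    (m : Fin M) (α : Fin r) (f : Fin k → Fin 2) :
    eval (coordsC k r M φ) (Zp k r M m α f) = φ m α f := by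
  simp only [Zp, map_add, map_mul, eval_X, eval_C, coordsC, allFrameCoords]
  simp only [if_true, if_false, Bool.ite_eq_true_distrib]
  apply Complex.ext <;> simp

lemma eval_Zbp (k r M : ℕ) (φ : Fin M → Fin r → (Fin k → Fin 2) → ℂ)
    (m : Fin M) (α : Fin r) (f : Fin k → Fin 2) :
    eval (coordsC k r M φ) (Zbp k r M m α f) = starRingEnd ℂ (φ m α f) := by
  simp only [Zbp, map_sub, map_mul, eval_X, eval_C, coordsC, allFrameCoords]
  simp only [if_true, if_false, Bool.ite_eq_true_distrib]
  apply Complex.ext <;> simp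

/-- The matrix of `H` with polynomial entries. -/
noncomputable def Hpoly (N k r M : ℕ) (E : Fin M → Fin k → Fin N) :
    Matrix (Fin N → Fin 2) (Fin N → Fin 2)
      (MvPolynomial (Fin M × Fin r × (Fin k → Fin 2) × Bool) ℂ) := fun g g' =>
  ∑ m, if ∀ i : Fin N, (∀ j : Fin k, E m j ≠ i) → g i = g' i
    then ∑ α, Zp k r M m α (g ∘ E m) * Zbp k r M m α (g' ∘ E m) else 0

lemma eval_Hpoly (N k r M : ℕ) (E : Fin M → Fin k → Fin N)
    (φ : Fin M → Fin r → (Fin k → Fin 2) → ℂ) (g g' : Fin N → Fin 2) :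
    eval (coordsC k r M φ) (Hpoly N k r M E g g')
      = (∑ m, clauseMatrixR N k r (E m) (φ m)) g g' := by
  rw [Hpoly, Matrix.sum_apply, map_sum]
  apply Finset.sum_congr rfl
  intro m _
  rw [clauseMatrixR]
  split_ifs with h
  · rw [map_sum]
    apply Finset.sum_congr rfl
    intro α _
    rw [map_mul, eval_Zp, eval_Zbp]
  · rw [map_zero]

end Poly

section Diag

lemma sum_indicator_mul {γ : Type*} [Fintype γ] [DecidableEq γ] (a b : γ) :
    ∑ f : γ, (starRingEnd ℂ (if f = a then (1:ℂ) else 0)) * (if f = b then (1:ℂ) else 0)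
      = if a = b then 1 else 0 := by
  have : ∀ f : γ, (starRingEnd ℂ (if f = a then (1:ℂ) else 0)) * (if f = b then (1:ℂ) else 0)
      = if f = a ∧ f = b then 1 else 0 := by
    intro f
    by_cases h1 : f = a <;> by_cases h2 : f = b <;> simp [h1, h2]
  rw [Finset.sum_congr rfl (fun f _ => this f)]
  by_cases hab : a = b
  · subst hab; simp
  · rw [if_neg hab]
    apply Finset.sum_eq_zero
    intro f _
    rw [if_neg]
    rintro ⟨h1, h2⟩
    exact hab (h1 ▸ h2 ▸ rfl)

lemma clause_diag (N k r M : ℕ) (E : Fin M → Fin k → Fin N)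
    (c : Fin M → (Fin r ↪ (Fin k → Fin 2))) :
    (∑ m, clauseMatrixR N k r (E m) (fun α f => if f = (c m) α then (1:ℂ) else 0))
      = Matrix.diagonal (fun g =>
          ((∑ m, ∑ α, if g ∘ E m = (c m) α then 1 else 0 : ℕ) : ℂ)) := by
  classical
  ext g g'
  rw [Matrix.sum_apply]
  by_cases hgg : g = g'
  · subst hgg
    rw [Matrix.diagonal_apply_eq]
    push_cast
    apply Finset.sum_congr rfl
    intro m _
    simp only [clauseMatrixR]
    rw [if_pos (fun i _ => trivial)]
    apply Finset.sum_congr rfl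
    intro α _
    by_cases h : g ∘ E m = (c m) α
    · simp [h]
    · simp [h]
  · rw [Matrix.diagonal_apply_ne _ hgg]
    obtain ⟨i, hi⟩ := Function.ne_iff.mp hgg
    apply Finset.sum_eq_zero
    intro m _
    simp only [clauseMatrixR]
    split_ifs with hcond
    · apply Finset.sum_eq_zero
      intro α _
      by_cases h1 : g ∘ E m = (c m) α
      · by_cases h2 : g' ∘ E m = (c m) α
        · exfalso
          obtain ⟨j, hj⟩ : ∃ j, E m j = i := by
            by_contra hno
            push_neg at hno
            exact hi (hcond i hno)
          apply hi
          have h3 : g (E m j) = g' (E m j) := by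
            have := congrFun (h1.trans h2.symm) j
            simpa using this
          rwa [hj] at h3
        · simp [h2]
      · simp [h1]
    · rfl

end Diag

lemma nat_pow_lt_of_logb (N k r M : ℕ) (hr : 0 < r) (hrk : r < 2 ^ k)
    (hM : (N : ℝ) / (-Real.logb 2 (1 - (r : ℝ) / 2 ^ k)) < M) :
    2 ^ N * (2 ^ k - r) ^ M < 2 ^ (k * M) := by
  have h2k : (0:ℝ) < 2 ^ k := by positivity
  have hrlt : (r : ℝ) < 2 ^ k := by exact_mod_cast hrk
  have hrpos : (0:ℝ) < r := by exact_mod_cast hr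
  set x : ℝ := 1 - (r : ℝ) / 2 ^ k with hxdef
  have hx0 : 0 < x := by
    rw [hxdef, sub_pos, div_lt_one h2k]; exact hrlt
  have hx1 : x < 1 := by
    rw [hxdef]
    have : (0:ℝ) < (r : ℝ) / 2 ^ k := by positivity
    linarith
  have hlog : Real.logb 2 x < 0 := Real.logb_neg one_lt_two hx0 hx1
  have hpos : 0 < -Real.logb 2 x := by linarith
  rw [div_lt_iff₀ hpos] at hM
  have hkey : (2:ℝ) ^ N * x ^ M < 1 := by
    have harg : (0:ℝ) < (2:ℝ) ^ N * x ^ M := by positivity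
    rw [← Real.logb_neg_iff one_lt_two harg]
    rw [Real.logb_mul (by positivity) (by positivity), Real.logb_pow, Real.logb_pow,
      Real.logb_self_eq_one one_lt_two]
    nlinarith [hM]
  have hcast : ((2 ^ N * (2 ^ k - r) ^ M : ℕ) : ℝ) < ((2 ^ (k * M) : ℕ) : ℝ) := by
    have hsub : ((2 ^ k - r : ℕ) : ℝ) = (2:ℝ) ^ k - r := by
      rw [Nat.cast_sub hrk.le]; push_cast; ring
    push_cast [hsub]
    have hxeq : (2:ℝ) ^ k - r = 2 ^ k * x := by
      rw [hxdef]; field_simp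
    rw [hxeq, mul_pow, pow_mul]
    calc (2:ℝ) ^ N * ((2 ^ k) ^ M * x ^ M) = (2 ^ k) ^ M * ((2:ℝ) ^ N * x ^ M) := by ring
      _ < (2 ^ k) ^ M * 1 := by
          apply mul_lt_mul_of_pos_left hkey (by positivity)
      _ = ((2:ℝ) ^ k) ^ M := by ring
  exact_mod_cast hcast

lemma card_embedding_avoid (k r : ℕ) (v : Fin k → Fin 2) :
    (univ.filter (fun e : Fin r ↪ (Fin k → Fin 2) => ∀ α, e α ≠ v)).card
      = (2 ^ k - 1).descFactorial r := by
  have hcard : Fintype.card {x : Fin k → Fin 2 // x ≠ v} = 2 ^ k - 1 := by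
    simp [Fintype.card_subtype_compl, Fintype.card_fun]
  have e : {e : Fin r ↪ (Fin k → Fin 2) // ∀ α, e α ≠ v}
      ≃ (Fin r ↪ {x : Fin k → Fin 2 // x ≠ v}) :=
    { toFun := fun e => ⟨fun a => ⟨e.1 a, e.2 a⟩,
        fun a b h => e.1.injective (congrArg Subtype.val h)⟩
      invFun := fun e => ⟨⟨fun a => (e a).1, fun a b h => e.injective (Subtype.ext h)⟩,
        fun a => (e a).2⟩
      left_inv := fun e => by ext a; rfl
      right_inv := fun e => by ext a; rfl }
  have h1 : (univ.filter (fun e : Fin r ↪ (Fin k → Fin 2) => ∀ α, e α ≠ v)).card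
      = Fintype.card {e : Fin r ↪ (Fin k → Fin 2) // ∀ α, e α ≠ v} :=
    (Fintype.card_subtype _).symm
  rw [h1, Fintype.card_congr e, Fintype.card_embedding_eq, hcard, Fintype.card_fin]

lemma exists_good_frame (N k r M : ℕ) (hrk : r < 2 ^ k) (E : Fin M → Fin k → Fin N) :
    ∃ c : Fin M → (Fin r ↪ (Fin k → Fin 2)),
      2 ^ (k * M) * (univ.filter
          (fun g : Fin N → Fin 2 => ∀ m α, g ∘ E m ≠ (c m) α)).card
        ≤ 2 ^ N * (2 ^ k - r) ^ M := by
  classical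
  have h2k : (0:ℕ) < 2 ^ k := Nat.pow_pos (by norm_num)
  have hTcard : Fintype.card (Fin r ↪ (Fin k → Fin 2)) = (2 ^ k).descFactorial r := by
    rw [Fintype.card_embedding_eq, Fintype.card_fin, Fintype.card_fun,
      Fintype.card_fin, Fintype.card_fin]
  -- total sum
  have hsum : ∑ c : Fin M → (Fin r ↪ (Fin k → Fin 2)),
      (univ.filter (fun g : Fin N → Fin 2 => ∀ m α, g ∘ E m ≠ (c m) α)).card
      = 2 ^ N * ((2 ^ k - 1).descFactorial r) ^ M := by
    have hstep : ∀ c : Fin M → (Fin r ↪ (Fin k → Fin 2)),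
        (univ.filter (fun g : Fin N → Fin 2 => ∀ m α, g ∘ E m ≠ (c m) α)).card =
        ∑ g : Fin N → Fin 2, ∏ m, if ∀ α, (c m) α ≠ g ∘ E m then 1 else 0 := by
      intro c
      rw [Finset.card_filter]
      apply Finset.sum_congr rfl
      intro g _
      rw [Finset.prod_boole]
      simp only [mem_univ, true_implies]
      congr 1
      simp only [eq_iff_iff]
      constructor
      · intro h m α hne; exact h m α hne.symm
      · intro h m α hne; exact h m α hne.symm
    simp only [hstep]
    rw [Finset.sum_comm]
    have hinner : ∀ g : Fin N → Fin 2,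
        ∑ c : Fin M → (Fin r ↪ (Fin k → Fin 2)),
          ∏ m, (if ∀ α, (c m) α ≠ g ∘ E m then (1:ℕ) else 0)
        = ((2 ^ k - 1).descFactorial r) ^ M := by
      intro g
      rw [← Fintype.prod_sum (fun m (e : Fin r ↪ (Fin k → Fin 2)) =>
        if ∀ α, e α ≠ g ∘ E m then (1:ℕ) else 0)]
      have : ∀ m : Fin M, ∑ e : Fin r ↪ (Fin k → Fin 2),
          (if ∀ α, e α ≠ g ∘ E m then (1:ℕ) else 0) = (2 ^ k - 1).descFactorial r := by
        intro m
        rw [Finset.sum_boole, ← card_embedding_avoid k r (g ∘ E m)]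
        simp
      rw [Finset.prod_congr rfl (fun m _ => this m), Finset.prod_const, Finset.card_univ,
        Fintype.card_fin]
    rw [Finset.sum_congr rfl (fun g _ => hinner g), Finset.sum_const, Finset.card_univ,
      Fintype.card_fun, Fintype.card_fin, Fintype.card_fin, smul_eq_mul]
  -- pigeonhole
  have hTne : Nonempty (Fin r ↪ (Fin k → Fin 2)) :=
    Function.Embedding.nonempty_iff_card_le.mpr
      (by simp only [Fintype.card_fin, Fintype.card_fun]; exact hrk.le)
  have hle : ∑ c : Fin M → (Fin r ↪ (Fin k → Fin 2)),
      (((2 ^ k).descFactorial r) ^ M *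
        (univ.filter (fun g : Fin N → Fin 2 => ∀ m α, g ∘ E m ≠ (c m) α)).card)
      ≤ ∑ _c : Fin M → (Fin r ↪ (Fin k → Fin 2)),
        (2 ^ N * ((2 ^ k - 1).descFactorial r) ^ M) := by
    rw [← Finset.mul_sum, hsum, Finset.sum_const, Finset.card_univ, Fintype.card_fun,
      hTcard, Fintype.card_fin, smul_eq_mul]
  obtain ⟨c, _, hc⟩ := Finset.exists_le_of_sum_le Finset.univ_nonempty hle
  refine ⟨c, ?_⟩
  have key : 2 ^ k * (2 ^ k - 1).descFactorial r
      = (2 ^ k - r) * (2 ^ k).descFactorial r := by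
    have h1 := Nat.succ_descFactorial_succ (2 ^ k - 1) r
    have h2 : 2 ^ k - 1 + 1 = 2 ^ k := Nat.succ_pred_eq_of_pos h2k
    rw [h2] at h1
    have h3 : (2 ^ k).descFactorial (r + 1) = (2 ^ k - r) * (2 ^ k).descFactorial r :=
      Nat.descFactorial_succ _ _
    rw [← h1, h3]
  have hDpos : 0 < (2 ^ k).descFactorial r :=
    Nat.pos_of_ne_zero (fun h =>
      Nat.lt_asymm hrk (Nat.descFactorial_eq_zero_iff_lt.mp h))
  set z := (univ.filter (fun g : Fin N → Fin 2 => ∀ m α, g ∘ E m ≠ (c m) α)).card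
  have hmul : ((2 ^ k).descFactorial r) ^ M * (2 ^ (k * M) * z)
      ≤ ((2 ^ k).descFactorial r) ^ M * (2 ^ N * (2 ^ k - r) ^ M) := by
    calc ((2 ^ k).descFactorial r) ^ M * (2 ^ (k * M) * z)
        = (2 ^ k) ^ M * (((2 ^ k).descFactorial r) ^ M * z) := by rw [pow_mul]; ring
      _ ≤ (2 ^ k) ^ M * (2 ^ N * ((2 ^ k - 1).descFactorial r) ^ M) :=
          Nat.mul_le_mul_left _ hc
      _ = 2 ^ N * ((2 ^ k * (2 ^ k - 1).descFactorial r) ^ M) := by rw [mul_pow]; ring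
      _ = 2 ^ N * ((2 ^ k - r) * (2 ^ k).descFactorial r) ^ M := by rw [key]
      _ = ((2 ^ k).descFactorial r) ^ M * (2 ^ N * (2 ^ k - r) ^ M) := by
          rw [mul_pow]; ring
  exact Nat.le_of_mul_le_mul_left hmul (Nat.pow_pos hDpos)


/-- Weak UNSAT bound: for random (k,r)-QSAT with `M` clauses on `N` qubits (each clause a
generic rank-`r` projector, genericity meaning avoidance of the zero set of a polynomial
not identically zero on orthonormal frames), `dim ker H ≤ 2^N (1 − r/2^k)^M` (stated in
the equivalent integer form `2^{kM} · dim ker H ≤ 2^N (2^k − r)^M`); consequently, if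
`M > N / (−log₂(1 − r/2^k))` then `H` has no zero-energy state. -/
theorem stmt12 (N k r M : ℕ) (hr : 0 < r) (hrk : r < 2 ^ k)
    (E : Fin M → Fin k → Fin N) (hE : ∀ m, Function.Injective (E m)) :
    ∃ p : MvPolynomial (Fin M × Fin r × (Fin k → Fin 2) × Bool) ℝ,
      (∃ φ : Fin M → Fin r → (Fin k → Fin 2) → ℂ,
        (∀ m α β, ∑ f, starRingEnd ℂ (φ m α f) * φ m β f = if α = β then 1 else 0) ∧
        MvPolynomial.eval (allFrameCoords k r M φ) p ≠ 0) ∧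
      ∀ φ : Fin M → Fin r → (Fin k → Fin 2) → ℂ,
        (∀ m α β, ∑ f, starRingEnd ℂ (φ m α f) * φ m β f = if α = β then 1 else 0) →
        MvPolynomial.eval (allFrameCoords k r M φ) p ≠ 0 →
        2 ^ (k * M) * Module.finrank ℂ
            (LinearMap.ker (Matrix.toLin' (∑ m, clauseMatrixR N k r (E m) (φ m)))) ≤
          2 ^ N * (2 ^ k - r) ^ M ∧
        ((N : ℝ) / (-Real.logb 2 (1 - (r : ℝ) / 2 ^ k)) < M →
          LinearMap.ker (Matrix.toLin' (∑ m, clauseMatrixR N k r (E m) (φ m))) = ⊥) := by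
  classical
  obtain ⟨c, hc⟩ := exists_good_frame N k r M hrk E
  set cnt := (univ.filter
    (fun g : Fin N → Fin 2 => ∀ m α, g ∘ E m ≠ (c m) α)).card with hcnt
  set βF : Finset (Fin N → Fin 2) :=
    univ.filter (fun g => ¬ ∀ m α, g ∘ E m ≠ (c m) α) with hβF
  set ι : ↥βF → (Fin N → Fin 2) := fun b => (b : Fin N → Fin 2) with hιdef
  have hι : Function.Injective ι := Subtype.val_injective
  set q := ((Hpoly N k r M E).submatrix ι ι).det with hq
  have keyEval : ∀ φ : Fin M → Fin r → (Fin k → Fin 2) → ℂ,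
      MvPolynomial.eval (allFrameCoords k r M φ)
        (rePart (q * MvPolynomial.map (starRingEnd ℂ) q))
      = Complex.normSq
          (((∑ m, clauseMatrixR N k r (E m) (φ m)).submatrix ι ι).det) := by
    intro φ
    have hqeval : MvPolynomial.eval (fun s => ((allFrameCoords k r M φ s : ℝ) : ℂ)) q
        = ((∑ m, clauseMatrixR N k r (E m) (φ m)).submatrix ι ι).det := by
      rw [hq, RingHom.map_det]
      congr 1
      ext b b'
      rw [RingHom.mapMatrix_apply, Matrix.map_apply, Matrix.submatrix_apply, Matrix.submatrix_apply]
      exact eval_Hpoly N k r M E φ (ι b) (ι b')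
    rw [eval_rePart, map_mul, eval_map_conj, hqeval, Complex.mul_conj]
    exact Complex.ofReal_re _
  refine ⟨rePart (q * MvPolynomial.map (starRingEnd ℂ) q), ?_, ?_⟩
  case _ =>
    refine ⟨(fun m α f => if f = (c m) α then 1 else 0), ?_, ?_⟩
    · intro m α β
      rw [sum_indicator_mul]
      by_cases hab : α = β
      · simp [hab]
      · rw [if_neg hab, if_neg (fun h => hab ((c m).injective h))]
    · rw [keyEval]
      rw [clause_diag N k r M E c, Matrix.submatrix_diagonal _ ι hι, Matrix.det_diagonal]
      intro h0
      rw [Complex.normSq_eq_zero] at h0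
      obtain ⟨b, _, hb0⟩ := Finset.prod_eq_zero_iff.mp h0
      rw [Function.comp_apply, Nat.cast_eq_zero, Finset.sum_eq_zero_iff] at hb0
      have hbmem : (↑b : Fin N → Fin 2) ∈ Finset.filter
          (fun g => ¬ ∀ m α, g ∘ E m ≠ (c m) α) Finset.univ := b.2
      rw [Finset.mem_filter] at hbmem
      apply hbmem.2
      intro m α heq
      have h1 := hb0 m (Finset.mem_univ m)
      rw [Finset.sum_eq_zero_iff] at h1
      have h2 := h1 α (Finset.mem_univ α)
      rw [if_pos heq] at h2
      exact one_ne_zero h2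
  case _ =>
    intro φ hφ hp
    rw [keyEval] at hp
    have hdet : ((∑ m, clauseMatrixR N k r (E m) (φ m)).submatrix ι ι).det ≠ 0 := by
      intro h; rw [h] at hp; simp at hp
    have hrank := card_le_rank_of_submatrix_det_ne_zero
      (∑ m, clauseMatrixR N k r (E m) (φ m)) ι hdet
    have hGcard : Fintype.card (Fin N → Fin 2) = 2 ^ N := by
      simp [Fintype.card_fun]
    have hcardβ : Fintype.card ↥βF + cnt = 2 ^ N := by
      rw [Fintype.card_coe]
      have h := Finset.card_filter_add_card_filter_not
        (s := (univ : Finset (Fin N → Fin 2)))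
        (p := fun g => ∀ m α, g ∘ E m ≠ (c m) α)
      rw [Finset.card_univ, hGcard] at h
      rw [hβF, hcnt, Nat.add_comm]
      exact h
    have hkerrank := finrank_ker_toLin' (∑ m, clauseMatrixR N k r (E m) (φ m))
    rw [hGcard] at hkerrank
    set z := Module.finrank ℂ
      (LinearMap.ker (Matrix.toLin' (∑ m, clauseMatrixR N k r (E m) (φ m)))) with hz
    have hcnt_eq : cnt = 2 ^ N - Fintype.card ↥βF := by
      omega
    have hzle : z ≤ cnt := by
      rw [hkerrank, hcnt_eq]
      exact Nat.sub_le_sub_left hrank _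
    constructor
    · calc 2 ^ (k * M) * z ≤ 2 ^ (k * M) * cnt := Nat.mul_le_mul_left _ hzle
        _ ≤ 2 ^ N * (2 ^ k - r) ^ M := hc
    · intro hM
      have hlt := nat_pow_lt_of_logb N k r M hr hrk hM
      have hz0 : z = 0 := by
        by_contra hzne
        have h1 : 2 ^ (k * M) ≤ 2 ^ (k * M) * z :=
          Nat.le_mul_of_pos_right _ (Nat.pos_of_ne_zero hzne)
        have h2 : 2 ^ (k * M) * z ≤ 2 ^ N * (2 ^ k - r) ^ M :=
          le_trans (Nat.mul_le_mul_left _ hzle) hc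
        exact absurd (lt_of_le_of_lt (le_trans h1 h2) hlt) (lt_irrefl _)
      exact Submodule.finrank_eq_zero.mp hz0
end
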